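/- Let e, m, n be positive integers with binomial(e+2, 2) = n + 1, let P^N be the projective space of degree-m hypersurfaces in Pⁿ, let X ⊂ P^N × Pⁿ be the universal hypersurface of degree m, and let P² → P^N be a general map given by the degree-e Veronese map P² → P^{binomial(e+2,2)−1} followed by a general linear inclusion into P^N. Let π : X = P² ×_{P^N} 𝒳 → P² be the pullback of the universal hypersurface. Then the restriction of the family π : X → P² to any curve C ⊂ P² of degree e or less has a section. -/

import Mathlib

/- A classical (point-set) framework for the universal hypersurface pulled back to `ℙ²`
by a Veronese embedding followed by a linear inclusion. -/

open scoped LinearAlgebra.Projectivization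

noncomputable section

/-- The nonzero representatives of a point of projective space. -/
def reps {V : Type*} [AddCommGroup V] [Module ℂ V] (x : ℙ ℂ V) : Set V :=
  {v | ∃ h : v ≠ 0, Projectivization.mk ℂ v h = x}

/-- A polynomial function on a complex vector space: an element of the subalgebra of
functions generated by the linear functionals. -/
def IsPolyFun {V : Type*} [AddCommGroup V] [Module ℂ V] (f : V → ℂ) : Prop :=
  f ∈ Algebra.adjoin ℂ {g : V → ℂ | IsLinearMap ℂ g}

/-- Degree-`e` homogeneous polynomials in three variables. -/
abbrev HPoly3 (e : ℕ) : Type := MvPolynomial.homogeneousSubmodule (Fin 3) ℂ e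

/-- Degree-`m` homogeneous polynomials in `n+1` variables. -/
abbrev HPolyN (n m : ℕ) : Type := MvPolynomial.homogeneousSubmodule (Fin (n+1)) ℂ m

/-- Evaluation at `v` as a linear functional on degree-`e` forms; `v ↦ [ev_v]` is the
degree-`e` Veronese embedding of `ℙ²` in the projective space of the dual of `HPoly3 e`. -/
def veroneseEval (e : ℕ) (v : Fin 3 → ℂ) : Module.Dual ℂ (HPoly3 e) :=
  (MvPolynomial.aeval v).toLinearMap.comp (MvPolynomial.homogeneousSubmodule (Fin 3) ℂ e).subtype

abbrev P2 : Type := ℙ ℂ (Fin 3 → ℂ)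
abbrev Pn (n : ℕ) : Type := ℙ ℂ (Fin (n+1) → ℂ)

/-- The total space of the pullback along (Veronese ∘ linear inclusion `ℓ`) of the universal
degree-`m` hypersurface in `ℙⁿ`: the pairs `(u, x) ∈ ℙ² × ℙⁿ` with
`F(ℓ(ev_u))(x) = 0`. -/
def PulledBackFamily (e n m : ℕ) (ℓ : Module.Dual ℂ (HPoly3 e) →ₗ[ℂ] HPolyN n m) :
    Set (P2 × Pn n) :=
  {ux | ∀ v ∈ reps ux.1, ∀ w ∈ reps ux.2,
    MvPolynomial.eval w ((ℓ (veroneseEval e v) : HPolyN n m) : MvPolynomial (Fin (n+1)) ℂ) = 0}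

/-- The plane curve defined by a nonzero form `g`. -/
def PlaneCurve {k : ℕ} (g : HPoly3 k) : Set P2 :=
  {u | ∀ v ∈ reps u, MvPolynomial.eval v (g : MvPolynomial (Fin 3) ℂ) = 0}

/-- Zariski-closed subsets of `ℙ² × ℙⁿ`. -/
def ClosedP2Pn (n : ℕ) (S : Set (P2 × Pn n)) : Prop :=
  ∃ F : Set (((Fin 3 → ℂ) × (Fin (n+1) → ℂ)) → ℂ), (∀ f ∈ F, IsPolyFun f) ∧
    S = {ux | ∀ f ∈ F, ∀ v ∈ reps ux.1, ∀ w ∈ reps ux.2, f (v, w) = 0}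

/-- The restriction of the family to the curve `C` admits a (regular, single-valued)
section: a Zariski-closed subset of `ℙ² × ℙⁿ` contained in the family over `C` which is the
graph of a function on `C`. -/
def SectionOverCurve (e n m : ℕ) (ℓ : Module.Dual ℂ (HPoly3 e) →ₗ[ℂ] HPolyN n m)
    (C : Set P2) : Prop :=
  ∃ S : Set (P2 × Pn n), ClosedP2Pn n S ∧
    (∀ ux ∈ S, ux.1 ∈ C ∧ ux ∈ PulledBackFamily e n m ℓ) ∧
    ∀ u ∈ C, ∃! x : Pn n, (u, x) ∈ S

/-!
A plane curve `g = 0` of degree `k ≤ e` is cut out in degree `e` by `P = g · X₀^(e-k)`, so its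
Veronese image lies in the hyperplane `H = {φ | φ P = 0}` of the dual of the degree-`e` forms,
and `dim H = n`. The linear inclusion sends `H` to at most `n` forms of degree `m > 0` in `n + 1`
variables, which have a common zero `x ≠ 0` by Krull's height theorem. Every point of the curve
is then sent to a hypersurface through `[x]`, so the constant map to `[x]` is a section.
-/

open MvPolynomial Module

namespace MvPolynomial

variable {K σ : Type*} [Field K]

def translate (c : σ → K) : MvPolynomial σ K ≃ₐ[K] MvPolynomial σ K :=
  AlgEquiv.ofAlgHom (aeval fun i => X i + C (c i)) (aeval fun i => X i - C (c i))
    (by ext i; simp) (by ext i; simp)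

lemma aeval_translate (c x : σ → K) (p : MvPolynomial σ K) :
    aeval x (translate c p) = aeval (x + c) p := by
  simp only [translate, AlgEquiv.ofAlgHom_apply]
  rw [← AlgHom.comp_apply, comp_aeval]
  congr 1
  ext i
  simp

lemma height_vanishingIdeal_singleton_eq (x y : σ → K) :
    (vanishingIdeal K {x}).height = (vanishingIdeal K {y}).height := by
  have : (vanishingIdeal K {x}).comap (translate (y - x)).toRingEquiv = vanishingIdeal K {y} := by
    ext p
    simp [aeval_translate]
  rw [← this, RingEquiv.height_comap]

/-- All maximal ideals are translates of each other, so each has the height of the ring. -/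
lemma height_vanishingIdeal_singleton [IsAlgClosed K] [Finite σ] (x : σ → K) :
    (vanishingIdeal K {x}).height = Nat.card σ := by
  have hsup := Ideal.sup_isMaximal_height_eq_ringKrullDim (R := MvPolynomial σ K)
  rw [ringKrullDim_of_isNoetherianRing, ringKrullDim_eq_zero_of_field, zero_add] at hsup
  have hconst : ⨆ (I : Ideal (MvPolynomial σ K)) (_ : I.IsMaximal), I.height =
      (vanishingIdeal K {x}).height := by
    refine le_antisymm (iSup₂_le fun I hI => ?_) (le_iSup₂_of_le _ inferInstance le_rfl)
    obtain ⟨y, rfl⟩ := isMaximal_iff_eq_vanishingIdeal_singleton.mp hI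
    exact (height_vanishingIdeal_singleton_eq y x).le
  rw [hconst] at hsup
  exact_mod_cast hsup

/-- If `x` were an isolated common zero, the maximal ideal of `x` would be a minimal prime over
the ideal spanned by `s`, and Krull's height theorem would bound its height by `#s`. -/
theorem exists_ne_forall_eval_eq_zero [IsAlgClosed K] [Fintype σ]
    (s : Finset (MvPolynomial σ K)) (hs : s.card < Fintype.card σ) (x : σ → K)
    (hx : ∀ p ∈ s, eval x p = 0) : ∃ y ≠ x, ∀ p ∈ s, eval y p = 0 := by
  by_contra! hisolated
  set I := Ideal.span (s : Set (MvPolynomial σ K))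
  have hzero : zeroLocus K I = {x} := by
    refine Set.eq_singleton_iff_unique_mem.mpr ⟨?_, fun y hy => ?_⟩
    · refine mem_zeroLocus_iff.mpr fun p hp => ?_
      have hle : I ≤ vanishingIdeal K {x} := Ideal.span_le.mpr fun q hq =>
        (mem_vanishingIdeal_singleton_iff x q).mpr (by simpa using hx q hq)
      exact (mem_vanishingIdeal_singleton_iff x p).mp (hle hp)
    · by_contra hyx
      obtain ⟨p, hp, hpy⟩ := hisolated y hyx
      exact hpy (by simpa using mem_zeroLocus_iff.mp hy p (Ideal.subset_span hp))
  have hrad : I.radical = vanishingIdeal K {x} := by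
    rw [← vanishingIdeal_zeroLocus_eq_radical (K := K), hzero]
  have hmin : vanishingIdeal K {x} ∈ I.minimalPrimes := by
    rw [← Ideal.radical_minimalPrimes, hrad, Ideal.minimalPrimes_eq_subsingleton_self]
    rfl
  have hheight := Ideal.height_le_card_of_mem_minimalPrimes_span_finset hmin
  rw [height_vanishingIdeal_singleton, Nat.card_eq_fintype_card] at hheight
  exact absurd (by exact_mod_cast hheight) hs.not_ge

theorem exists_ne_zero_forall_mem_eval_eq_zero [IsAlgClosed K] [Fintype σ]
    (W : Submodule K (MvPolynomial σ K)) [FiniteDimensional K W]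
    (hW : finrank K W < Fintype.card σ) (hW₀ : ∀ p ∈ W, constantCoeff p = 0) :
    ∃ w ≠ 0, ∀ p ∈ W, eval w p = 0 := by
  classical
  let b := finBasis K W
  obtain ⟨w, hw, hwb⟩ := exists_ne_forall_eval_eq_zero
    (Finset.univ.image fun i => ((b i : W) : MvPolynomial σ K))
    (Finset.card_image_le.trans_lt (by simpa using hW)) 0 (by simp [eval_zero, hW₀])
  refine ⟨w, hw, fun p hp => ?_⟩
  have : (aeval w).toLinearMap ∘ₗ W.subtype = 0 :=
    b.ext fun i => by simpa using hwb _ (Finset.mem_image_of_mem _ (Finset.mem_univ i))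
  simpa using LinearMap.congr_fun this ⟨p, hp⟩

theorem IsHomogeneous.eval_smul {R : Type*} [CommSemiring R] {p : MvPolynomial σ R} {n : ℕ}
    (hp : p.IsHomogeneous n) (a : R) (x : σ → R) :
    eval (a • x) p = a ^ n * eval x p := by
  rw [eval_eq, eval_eq, Finset.mul_sum]
  refine Finset.sum_congr rfl fun d hd => ?_
  simp only [Pi.smul_apply, smul_eq_mul, mul_pow, Finset.prod_mul_distrib,
    Finset.prod_pow_eq_pow_sum, ← hp.degree_eq_sum_deg_support hd]
  ring

instance [Finite σ] (n : ℕ) : FiniteDimensional K (homogeneousSubmodule σ K n) :=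
  Module.Finite.iff_fg.mpr (homogeneousSubmodule_fg σ K n)

theorem finrank_homogeneousSubmodule [Fintype σ] [DecidableEq σ] (n : ℕ) :
    finrank K (homogeneousSubmodule σ K n) = (Fintype.card σ + n - 1).choose n := by
  have hdeg : {d : σ →₀ ℕ | d.degree = n} =
      ((Finset.univ : Finset σ).finsuppAntidiag n : Set (σ →₀ ℕ)) := by
    ext d
    simp [Finset.mem_finsuppAntidiag, Finsupp.degree_eq_sum]
  rw [homogeneousSubmodule_eq_finsupp_supported, hdeg,
    (AddMonoidAlgebra.supportedEquivFinsupp _).finrank_eq, finrank_finsupp_self]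
  simp only [Finset.coe_sort_coe, Fintype.card_coe, Finset.card_finsuppAntidiag_nat_eq_choose,
    Finset.card_univ]

end MvPolynomial

theorem Projectivization.mk_eq_mk_iff_forall_dualAnnihilator {K V : Type*} [Field K]
    [AddCommGroup V] [Module K V] {v w : V} (hv : v ≠ 0) (hw : w ≠ 0) :
    mk K v hv = mk K w hw ↔ ∀ φ ∈ (K ∙ w).dualAnnihilator, φ v = 0 := by
  rw [mk_eq_mk_iff', ← Submodule.mem_span_singleton, ← Submodule.mem_dualCoannihilator,
    Subspace.dualAnnihilator_dualCoannihilator_eq]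

lemma isPolyFun_eval {V ι : Type*} [AddCommGroup V] [Module ℂ V] {L : ι → V → ℂ}
    (hL : ∀ i, IsLinearMap ℂ (L i)) (q : MvPolynomial ι ℂ) :
    IsPolyFun fun v => eval (fun i => L i v) q := by
  have hq : aeval (R := ℂ) L q ∈ Algebra.adjoin ℂ (Set.range L) := by
    rw [← aeval_range]
    exact ⟨q, rfl⟩
  have hpt : (fun v => eval (fun i => L i v) q) = aeval L q := by
    ext v
    change _ = Pi.evalAlgHom ℂ (fun _ => ℂ) v (aeval L q)
    rw [← AlgHom.comp_apply, comp_aeval]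
    rfl
  rw [IsPolyFun, hpt]
  exact Algebra.adjoin_mono (Set.range_subset_iff.mpr hL) hq

lemma rep_mem_reps {V : Type*} [AddCommGroup V] [Module ℂ V] (x : ℙ ℂ V) : x.rep ∈ reps x :=
  ⟨x.rep_nonzero, x.mk_rep⟩

lemma eq_mk_iff_forall_mem_reps {V : Type*} [AddCommGroup V] [Module ℂ V] (x : ℙ ℂ V) {w : V}
    (hw : w ≠ 0) :
    x = Projectivization.mk ℂ w hw ↔ ∀ w' ∈ reps x, ∀ φ ∈ (ℂ ∙ w).dualAnnihilator, φ w' = 0 := by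
  constructor
  · rintro rfl w' ⟨hw', hmk⟩
    exact (Projectivization.mk_eq_mk_iff_forall_dualAnnihilator hw' hw).mp hmk
  · intro h
    rw [← x.mk_rep]
    exact (Projectivization.mk_eq_mk_iff_forall_dualAnnihilator _ hw).mpr (h _ (rep_mem_reps x))

lemma closedP2Pn_planeCurve_prod_singleton {k : ℕ} (n : ℕ) (g : HPoly3 k)
    {w : Fin (n + 1) → ℂ} (hw : w ≠ 0) :
    ClosedP2Pn n (PlaneCurve g ×ˢ {Projectivization.mk ℂ w hw}) := by
  refine ⟨insert (fun p => eval p.1 (g : MvPolynomial (Fin 3) ℂ))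
    ((fun φ p => φ p.2) '' ((ℂ ∙ w).dualAnnihilator : Set (Dual ℂ (Fin (n + 1) → ℂ)))), ?_, ?_⟩
  · rintro f (rfl | ⟨φ, -, rfl⟩)
    · exact isPolyFun_eval (fun i => (LinearMap.proj i ∘ₗ LinearMap.fst ℂ _ _).isLinear) _
    · exact Algebra.subset_adjoin (φ ∘ₗ LinearMap.snd ℂ _ _).isLinear
  · ext ⟨u, x⟩
    simp only [Set.mem_prod, Set.mem_singleton_iff, Set.mem_ofPred_eq, Set.forall_mem_insert,
      Set.forall_mem_image, eq_mk_iff_forall_mem_reps x hw]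
    constructor
    · rintro ⟨hu, hx⟩
      exact ⟨fun v hv _ _ => hu v hv, fun φ hφ _ _ w' hw' => hx w' hw' φ hφ⟩
    · rintro ⟨hu, hx⟩
      exact ⟨fun v hv => hu v hv _ (rep_mem_reps x),
        fun w' hw' φ hφ => hx hφ _ (rep_mem_reps u) w' hw'⟩

lemma sectionOverCurve_of_prod_singleton {e n m : ℕ} (ℓ : Dual ℂ (HPoly3 e) →ₗ[ℂ] HPolyN n m)
    {C : Set P2} {x : Pn n} (hC : ClosedP2Pn n (C ×ˢ {x}))
    (hx : ∀ u ∈ C, (u, x) ∈ PulledBackFamily e n m ℓ) : SectionOverCurve e n m ℓ C := by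
  refine ⟨C ×ˢ {x}, hC, ?_, fun u hu => ⟨x, ⟨hu, rfl⟩, fun _ hy => hy.2⟩⟩
  rintro ⟨u, _⟩ ⟨hu, rfl⟩
  exact ⟨hu, hx u hu⟩

theorem sectionOverCurve_of_finrank_lt {e n m k : ℕ} (hm : 0 < m)
    (ℓ : Dual ℂ (HPoly3 e) →ₗ[ℂ] HPolyN n m) (g : HPoly3 k)
    (H : Submodule ℂ (Dual ℂ (HPoly3 e))) (hH : finrank ℂ H < n + 1)
    (hgH : ∀ v, eval v (g : MvPolynomial (Fin 3) ℂ) = 0 → veroneseEval e v ∈ H) :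
    SectionOverCurve e n m ℓ (PlaneCurve g) := by
  let W := H.map ((homogeneousSubmodule (Fin (n + 1)) ℂ m).subtype ∘ₗ ℓ)
  have hW₀ : ∀ p ∈ W, constantCoeff p = 0 := by
    rintro _ ⟨φ, -, rfl⟩
    exact (ℓ φ).2.coeff_eq_zero (by simpa using hm.ne)
  obtain ⟨w, hw, hwW⟩ := exists_ne_zero_forall_mem_eval_eq_zero W
    ((Submodule.finrank_map_le _ _).trans_lt (by simpa using hH)) hW₀
  refine sectionOverCurve_of_prod_singleton ℓ (closedP2Pn_planeCurve_prod_singleton n g hw) ?_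
  rintro u hu v hv w' ⟨hw', hmk⟩
  obtain ⟨a, rfl⟩ := (Projectivization.mk_eq_mk_iff' ℂ _ _ hw' hw).mp hmk
  rw [IsHomogeneous.eval_smul (ℓ _).2]
  exact mul_eq_zero_of_right _ (hwW _ ⟨_, hgH v (hu v hv), rfl⟩)

theorem universal_hypersurface_pullback_has_sections_over_low_degree_curves_general
    (e n m : ℕ) (hm : 0 < m)
    (hbinom : (e + 2).choose 2 = n + 1)
    (ℓ : Module.Dual ℂ (HPoly3 e) →ₗ[ℂ] HPolyN n m)
    (k : ℕ) (hke : k ≤ e) (g : HPoly3 k) (hg : g ≠ 0) :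
    SectionOverCurve e n m ℓ (PlaneCurve g) := by
  have hP : (g : MvPolynomial (Fin 3) ℂ) * X 0 ^ (e - k) ∈ homogeneousSubmodule (Fin 3) ℂ e := by
    simpa [Nat.add_sub_cancel' hke] using g.2.mul (isHomogeneous_X_pow (0 : Fin 3) (e - k))
  set P : HPoly3 e := ⟨_, hP⟩
  have hP₀ : P ≠ 0 := fun h => mul_ne_zero (by simpa using hg) (pow_ne_zero _ (X_ne_zero 0))
    (congrArg Subtype.val h)
  refine sectionOverCurve_of_finrank_lt hm ℓ g (LinearMap.ker (Dual.eval ℂ _ P)) ?_ ?_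
  · have := Dual.finrank_ker_add_one_of_ne_zero fun h => hP₀ ((eval_apply_eq_zero_iff ℂ P).mp h)
    rw [Subspace.dual_finrank_eq, finrank_homogeneousSubmodule, Fintype.card_fin,
      show 3 + e - 1 = e + 2 by omega, Nat.choose_symm_add, hbinom] at this
    omega
  · intro v hv
    simp [veroneseEval, P, hv]

/-- For `binom (e+2) 2 = n + 1`, the pullback of the universal degree-`m` hypersurface in
`ℙⁿ` to `ℙ²` along the degree-`e` Veronese followed by a (general) linear inclusion has a
section over every plane curve of degree at most `e`.  (The statement holds for every
injective linear inclusion, which formalizes "a general linear inclusion".) -/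
theorem universal_hypersurface_pullback_has_sections_over_low_degree_curves
    (e n m : ℕ) (he : 0 < e) (hn : 0 < n) (hm : 0 < m)
    (hbinom : (e + 2).choose 2 = n + 1)
    (ℓ : Module.Dual ℂ (HPoly3 e) →ₗ[ℂ] HPolyN n m) (hℓ : Function.Injective ℓ)
    (k : ℕ) (hk : 1 ≤ k) (hke : k ≤ e) (g : HPoly3 k) (hg : g ≠ 0) :
    SectionOverCurve e n m ℓ (PlaneCurve g) :=
  universal_hypersurface_pullback_has_sections_over_low_degree_curves_general e n m hm hbinom ℓ k
    hke g hg
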